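/- Let u₁, w₁, u₂, w₂ be real solutions of the same second-order linear ODE −ħ²ψ'' + (v − λ)ψ = 0 on an interval, with Wronskians {u₁, w₁} = −ħ^{−1}(1 + O(ħ)) and {u₂, w₂} = ħ^{−1}(1 + O(ħ)). Suppose a nonzero solution ψ equals A₁(cos ϑ₁·u₁ + sin ϑ₁·w₁) = A₂(cos ϑ₂·u₂ + sin ϑ₂·w₂) with A₁, A₂ > 0. If moreover |{u₁, u₂}| ≤ (1/2)ħ^{−1}e^{−Ω/ħ}(1+Cħ) and |{u₁, w₂}|, |{w₁, u₂}| ≤ C_ε e^{−(1−ε)Ω/ħ}, then A₁|sin ϑ₁| ≤ C'_ε A₂ e^{−(1−ε)Ω/ħ} and A₂|sin ϑ₂| ≤ C'_ε A₁ e^{−(1−ε)Ω/ħ} for every ε > 0 and small ħ. -/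
import Mathlib

/-- The Wronskian `{f, g} = f' g - f g'`. -/
noncomputable def Wr (f g : ℝ → ℝ) (x : ℝ) : ℝ :=
  deriv f x * g x - f x * deriv g x

lemma arith_aux (hb C Cε E A B s W X Y : ℝ)
    (hb0 : 0 < hb) (hb1 : hb ≤ 1) (hbC : hb < 1/(2*C))
    (hC : 0 < C) (hCε : 0 < Cε) (hE : 0 < E)
    (hs : 0 ≤ s) (hA : 0 < A) (hB : 0 < B)
    (hW : hb⁻¹ - C ≤ W) (hX : X ≤ (1/2) * hb⁻¹ * E * (1 + C * hb)) (hY : Y ≤ Cε * E)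
    (h1 : A * s * W ≤ B * (X + Y)) :
    A * s ≤ (1 + C + 2 * Cε) * B * E := by
  have ht : 0 < hb⁻¹ := inv_pos.mpr hb0
  have hinv : hb * hb⁻¹ = 1 := mul_inv_cancel₀ hb0.ne'
  have hCt : C < hb⁻¹ / 2 := by
    have h2C : (0:ℝ) < 2*C := by positivity
    have := (lt_div_iff₀ h2C).mp hbC
    nlinarith [mul_pos hb0 ht]
  have k1 : A * s * (hb⁻¹/2) ≤ A * s * W := by nlinarith [mul_nonneg hA.le hs]
  have k2 : B * (X + Y) ≤ B * ((1/2) * hb⁻¹ * E * (1 + C * hb) + Cε * E) := by nlinarith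
  have k3 := mul_le_mul_of_nonneg_left ((k1.trans h1).trans k2)
    (by positivity : (0:ℝ) ≤ 2 * hb)
  have l1 : 2 * hb * (A * s * (hb⁻¹/2)) = A * s := by field_simp
  have l2 : 2 * hb * (B * ((1/2) * hb⁻¹ * E * (1 + C * hb) + Cε * E))
      = B * E * (1 + C * hb) + 2 * hb * (B * (Cε * E)) := by field_simp
  rw [l1, l2] at k3
  nlinarith [k3, mul_le_mul_of_nonneg_left hb1 (mul_pos (mul_pos hB hE) hC).le,
    mul_le_mul_of_nonneg_left hb1 (mul_pos (mul_pos hB hCε) hE).le]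

/-- If a nonzero real solution `ψ` of a Schrödinger equation equals
`A₁(cos ϑ₁ u₁ + sin ϑ₁ w₁) = A₂(cos ϑ₂ u₂ + sin ϑ₂ w₂)` on an interval, with the stated
Wronskian asymptotics `{u₁,w₁} = -hb⁻¹(1+O(hb))`, `{u₂,w₂} = hb⁻¹(1+O(hb))`,
`|{u₁,u₂}| ≤ hb⁻¹ e^{-Ω/hb}(1+Chb)/2` and exponentially small cross Wronskians, then
`A₁ |sin ϑ₁| ≤ C'_ε A₂ e^{-(1-ε)Ω/hb}` and `A₂ |sin ϑ₂| ≤ C'_ε A₁ e^{-(1-ε)Ω/hb}`. -/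
theorem stmt9 (a b Ω : ℝ) (hab : a < b) (hΩ : 0 < Ω)
    (u₁ w₁ u₂ w₂ : ℝ → ℝ → ℝ) (A₁ A₂ ϑ₁ ϑ₂ : ℝ → ℝ)
    (hA₁ : ∀ hb : ℝ, 0 < hb → 0 < A₁ hb) (hA₂ : ∀ hb : ℝ, 0 < hb → 0 < A₂ hb)
    (hdiff : ∀ hb : ℝ, 0 < hb → ∀ x ∈ Set.Ioo a b,
      DifferentiableAt ℝ (u₁ hb) x ∧ DifferentiableAt ℝ (w₁ hb) x ∧
      DifferentiableAt ℝ (u₂ hb) x ∧ DifferentiableAt ℝ (w₂ hb) x)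
    (hmatch : ∀ hb : ℝ, 0 < hb → ∀ x ∈ Set.Ioo a b,
      A₁ hb * (Real.cos (ϑ₁ hb) * u₁ hb x + Real.sin (ϑ₁ hb) * w₁ hb x) =
      A₂ hb * (Real.cos (ϑ₂ hb) * u₂ hb x + Real.sin (ϑ₂ hb) * w₂ hb x))
    (hW : ∃ C > (0 : ℝ), ∃ hb₀ > (0 : ℝ), ∀ hb : ℝ, 0 < hb → hb < hb₀ →
      ∀ x ∈ Set.Ioo a b,
        |Wr (u₁ hb) (w₁ hb) x + hb⁻¹| ≤ C ∧
        |Wr (u₂ hb) (w₂ hb) x - hb⁻¹| ≤ C ∧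
        |Wr (u₁ hb) (u₂ hb) x| ≤ (1 / 2) * hb⁻¹ * Real.exp (-Ω / hb) * (1 + C * hb))
    (hcross : ∀ ε > (0 : ℝ), ∃ Cε > (0 : ℝ), ∃ hbε > (0 : ℝ), ∀ hb : ℝ, 0 < hb → hb < hbε →
      ∀ x ∈ Set.Ioo a b,
        |Wr (u₁ hb) (w₂ hb) x| ≤ Cε * Real.exp (-(1 - ε) * Ω / hb) ∧
        |Wr (w₁ hb) (u₂ hb) x| ≤ Cε * Real.exp (-(1 - ε) * Ω / hb)) :
    ∀ ε > (0 : ℝ), ∃ C' > (0 : ℝ), ∃ hb₁ > (0 : ℝ), ∀ hb : ℝ, 0 < hb → hb < hb₁ →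
      A₁ hb * |Real.sin (ϑ₁ hb)| ≤ C' * A₂ hb * Real.exp (-(1 - ε) * Ω / hb) ∧
      A₂ hb * |Real.sin (ϑ₂ hb)| ≤ C' * A₁ hb * Real.exp (-(1 - ε) * Ω / hb) := by
  obtain ⟨C, hC, hb₀, hhb₀, hWb⟩ := hW
  intro ε hε
  obtain ⟨Cε, hCε, hbε, hhbε, hXb⟩ := hcross ε hε
  refine ⟨1 + C + 2 * Cε, by positivity, min (min hb₀ hbε) (min (1/(2*C)) 1),
    by positivity, ?_⟩
  intro hb hb0 hbm
  have hblt₀ : hb < hb₀ := lt_of_lt_of_le hbm (le_trans (min_le_left _ _) (min_le_left _ _))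
  have hbltε : hb < hbε := lt_of_lt_of_le hbm (le_trans (min_le_left _ _) (min_le_right _ _))
  have hbC : hb < 1/(2*C) := lt_of_lt_of_le hbm (le_trans (min_le_right _ _) (min_le_left _ _))
  have hb1 : hb ≤ 1 := le_of_lt (lt_of_lt_of_le hbm (le_trans (min_le_right _ _) (min_le_right _ _)))
  set x₀ : ℝ := (a + b) / 2 with hx₀def
  have hx₀ : x₀ ∈ Set.Ioo a b := ⟨by simp only [hx₀def]; linarith, by simp only [hx₀def]; linarith⟩
  obtain ⟨hdu₁, hdw₁, hdu₂, hdw₂⟩ := hdiff hb hb0 x₀ hx₀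
  have Ev := hmatch hb hb0 x₀ hx₀
  -- derivative equality
  have heq : (fun x => A₁ hb * (Real.cos (ϑ₁ hb) * u₁ hb x + Real.sin (ϑ₁ hb) * w₁ hb x))
      =ᶠ[nhds x₀] (fun x => A₂ hb * (Real.cos (ϑ₂ hb) * u₂ hb x + Real.sin (ϑ₂ hb) * w₂ hb x)) :=
    Filter.eventuallyEq_of_mem (isOpen_Ioo.mem_nhds hx₀) (fun x hx => hmatch hb hb0 x hx)
  have d1 : HasDerivAt (fun x => A₁ hb * (Real.cos (ϑ₁ hb) * u₁ hb x + Real.sin (ϑ₁ hb) * w₁ hb x))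
      (A₁ hb * (Real.cos (ϑ₁ hb) * deriv (u₁ hb) x₀ + Real.sin (ϑ₁ hb) * deriv (w₁ hb) x₀)) x₀ :=
    (((hdu₁.hasDerivAt.const_mul (Real.cos (ϑ₁ hb))).add
      (hdw₁.hasDerivAt.const_mul (Real.sin (ϑ₁ hb)))).const_mul (A₁ hb))
  have d2 : HasDerivAt (fun x => A₂ hb * (Real.cos (ϑ₂ hb) * u₂ hb x + Real.sin (ϑ₂ hb) * w₂ hb x))
      (A₂ hb * (Real.cos (ϑ₂ hb) * deriv (u₂ hb) x₀ + Real.sin (ϑ₂ hb) * deriv (w₂ hb) x₀)) x₀ :=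
    (((hdu₂.hasDerivAt.const_mul (Real.cos (ϑ₂ hb))).add
      (hdw₂.hasDerivAt.const_mul (Real.sin (ϑ₂ hb)))).const_mul (A₂ hb))
  have Ed : A₁ hb * (Real.cos (ϑ₁ hb) * deriv (u₁ hb) x₀ + Real.sin (ϑ₁ hb) * deriv (w₁ hb) x₀)
      = A₂ hb * (Real.cos (ϑ₂ hb) * deriv (u₂ hb) x₀ + Real.sin (ϑ₂ hb) * deriv (w₂ hb) x₀) := by
    have := heq.deriv_eq
    rw [d1.deriv, d2.deriv] at this
    exact this
  -- key Wronskian identities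
  have key₁ : A₁ hb * Real.sin (ϑ₁ hb) * Wr (u₁ hb) (w₁ hb) x₀
      = A₂ hb * (Real.cos (ϑ₂ hb) * Wr (u₁ hb) (u₂ hb) x₀
        + Real.sin (ϑ₂ hb) * Wr (u₁ hb) (w₂ hb) x₀) := by
    simp only [Wr]
    linear_combination Ev * deriv (u₁ hb) x₀ - Ed * u₁ hb x₀
  have key₂ : A₂ hb * Real.sin (ϑ₂ hb) * Wr (u₂ hb) (w₂ hb) x₀
      = -(A₁ hb * (Real.cos (ϑ₁ hb) * Wr (u₁ hb) (u₂ hb) x₀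
        + Real.sin (ϑ₁ hb) * Wr (w₁ hb) (u₂ hb) x₀)) := by
    simp only [Wr]
    linear_combination Ed * u₂ hb x₀ - Ev * deriv (u₂ hb) x₀
  obtain ⟨bW₁, bW₂, bX⟩ := hWb hb hb0 hblt₀ x₀ hx₀
  obtain ⟨bY₁, bY₂⟩ := hXb hb hb0 hbltε x₀ hx₀
  have hA1 := hA₁ hb hb0
  have hA2 := hA₂ hb hb0
  set E := Real.exp (-(1 - ε) * Ω / hb) with hE
  have hEpos : 0 < E := Real.exp_pos _
  -- exp(-Ω/hb) ≤ E
  have hexp : Real.exp (-Ω / hb) ≤ E := by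
    rw [hE]
    apply Real.exp_le_exp.mpr
    rw [div_le_div_iff₀ hb0 hb0]
    nlinarith [mul_pos (mul_pos hε hΩ) hb0]
  have hX' : |Wr (u₁ hb) (u₂ hb) x₀| ≤ (1/2) * hb⁻¹ * E * (1 + C * hb) := by
    refine bX.trans ?_
    have h1 : 0 < hb⁻¹ := inv_pos.mpr hb0
    exact mul_le_mul_of_nonneg_right
      (mul_le_mul_of_nonneg_left hexp (by positivity)) (by nlinarith)
  -- lower bounds on diagonal Wronskians
  have hWl₁ : hb⁻¹ - C ≤ |Wr (u₁ hb) (w₁ hb) x₀| := by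
    have h := (abs_le.mp bW₁).2
    have := neg_abs_le (Wr (u₁ hb) (w₁ hb) x₀)
    linarith
  have hWl₂ : hb⁻¹ - C ≤ |Wr (u₂ hb) (w₂ hb) x₀| := by
    have h := (abs_le.mp bW₂).1
    have := le_abs_self (Wr (u₂ hb) (w₂ hb) x₀)
    linarith
  -- absolute value bounds from the key identities
  have B1 : A₁ hb * |Real.sin (ϑ₁ hb)| * |Wr (u₁ hb) (w₁ hb) x₀|
      ≤ A₂ hb * (|Wr (u₁ hb) (u₂ hb) x₀| + |Wr (u₁ hb) (w₂ hb) x₀|) := by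
    have e : A₁ hb * |Real.sin (ϑ₁ hb)| * |Wr (u₁ hb) (w₁ hb) x₀|
        = |A₁ hb * Real.sin (ϑ₁ hb) * Wr (u₁ hb) (w₁ hb) x₀| := by
      rw [abs_mul, abs_mul, abs_of_pos hA1]
    rw [e, key₁, abs_mul, abs_of_pos hA2]
    refine mul_le_mul_of_nonneg_left ?_ hA2.le
    refine (abs_add_le _ _).trans (add_le_add ?_ ?_)
    · rw [abs_mul]
      exact mul_le_of_le_one_left (abs_nonneg _) (Real.abs_cos_le_one _)
    · rw [abs_mul]
      exact mul_le_of_le_one_left (abs_nonneg _) (Real.abs_sin_le_one _)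
  have B2 : A₂ hb * |Real.sin (ϑ₂ hb)| * |Wr (u₂ hb) (w₂ hb) x₀|
      ≤ A₁ hb * (|Wr (u₁ hb) (u₂ hb) x₀| + |Wr (w₁ hb) (u₂ hb) x₀|) := by
    have e : A₂ hb * |Real.sin (ϑ₂ hb)| * |Wr (u₂ hb) (w₂ hb) x₀|
        = |A₂ hb * Real.sin (ϑ₂ hb) * Wr (u₂ hb) (w₂ hb) x₀| := by
      rw [abs_mul, abs_mul, abs_of_pos hA2]
    rw [e, key₂, abs_neg, abs_mul, abs_of_pos hA1]
    refine mul_le_mul_of_nonneg_left ?_ hA1.le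
    refine (abs_add_le _ _).trans (add_le_add ?_ ?_)
    · rw [abs_mul]
      exact mul_le_of_le_one_left (abs_nonneg _) (Real.abs_cos_le_one _)
    · rw [abs_mul]
      exact mul_le_of_le_one_left (abs_nonneg _) (Real.abs_sin_le_one _)
  constructor
  · exact arith_aux hb C Cε E (A₁ hb) (A₂ hb) _ _ _ _ hb0 hb1 hbC hC hCε hEpos
      (abs_nonneg _) hA1 hA2 hWl₁ hX' bY₁ B1
  · exact arith_aux hb C Cε E (A₂ hb) (A₁ hb) _ _ _ _ hb0 hb1 hbC hC hCε hEpos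
      (abs_nonneg _) hA2 hA1 hWl₂ hX' bY₂ B2
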